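/- Let G₁, G₂ be two generalized Toffoli gates on n lines with the same target t but distinct control sets C₁ ≠ C₂ (both not containing t). Then there exists a one-cold input pattern x (an input with exactly one coordinate false) such that exactly one of the two gates in the cascade G₂ ∘ G₁ flips the target, hence (G₂ ∘ G₁)(x) ≠ x. -/
import Mathlib


def gToffoli (n : ℕ) (C : Finset (Fin n)) (t : Fin n) :
    (Fin n → Bool) → (Fin n → Bool) := fun x i =>
  if i = t then xor (decide (∀ j ∈ C, x j = true)) (x i) else x i

lemma gToffoli_nofire {n : ℕ} {C : Finset (Fin n)} {t : Fin n} {x : Fin n → Bool}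
    {j : Fin n} (hj : j ∈ C) (hx : x j = false) : gToffoli n C t x = x := by
  funext i
  unfold gToffoli
  split
  · have : ¬ ∀ k ∈ C, x k = true := fun h => by simp [h j hj] at hx
    simp [this]
  · rfl

lemma gToffoli_fire {n : ℕ} {C : Finset (Fin n)} {t : Fin n} {x : Fin n → Bool}
    (h : ∀ k ∈ C, x k = true) :
    gToffoli n C t x = fun i => if i = t then !(x t) else x i := by
  funext i
  unfold gToffoli
  split
  · next hi => rw [hi, decide_eq_true (by exact h)]; simp
  · rfl

theorem one_cold_detects_two_gate_trojan (n : ℕ) (C₁ C₂ : Finset (Fin n)) (t : Fin n)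
    (ht₁ : t ∉ C₁) (ht₂ : t ∉ C₂) (hC : C₁ ≠ C₂) :
    ∃ x : Fin n → Bool,
      (∃! j : Fin n, x j = false) ∧
      Xor' (gToffoli n C₁ t x ≠ x)
           (gToffoli n C₂ t (gToffoli n C₁ t x) ≠ gToffoli n C₁ t x) ∧
      (gToffoli n C₂ t ∘ gToffoli n C₁ t) x ≠ x := by
  obtain ⟨j, hj⟩ : ∃ j, (j ∈ C₁ ∧ j ∉ C₂) ∨ (j ∈ C₂ ∧ j ∉ C₁) := by
    by_contra h
    push_neg at h
    exact hC (Finset.ext fun k => by have := h k; tauto)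
  set x : Fin n → Bool := fun i => decide (i ≠ j) with hxdef
  have hxj : x j = false := by simp [hxdef]
  have hxne : ∀ i, i ≠ j → x i = true := fun i hi => by simp [hxdef, hi]
  have huniq : ∃! k : Fin n, x k = false := by
    refine ⟨j, hxj, fun k hk => ?_⟩
    by_contra hkj
    simp [hxne k hkj] at hk
  refine ⟨x, huniq, ?_⟩
  rcases hj with ⟨hj1, hj2⟩ | ⟨hj2, hj1⟩
  · -- j ∈ C₁, j ∉ C₂ : G₁ does not fire, G₂ fires
    have htj : t ≠ j := fun h => ht₁ (h ▸ hj1)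
    have hxt : x t = true := hxne t htj
    have h1 : gToffoli n C₁ t x = x := gToffoli_nofire hj1 hxj
    have h2 : gToffoli n C₂ t x = fun i => if i = t then !(x t) else x i :=
      gToffoli_fire (fun k hk => hxne k (fun h => hj2 (h ▸ hk)))
    have h2ne : gToffoli n C₂ t x ≠ x := by
      intro h
      have := congrFun h t
      rw [h2] at this
      simp [hxt] at this
    constructor
    · exact Or.inr ⟨by rw [h1]; exact h2ne, not_not.mpr h1⟩
    · simpa [Function.comp, h1] using h2ne
  · -- j ∈ C₂, j ∉ C₁ : G₁ fires, G₂ does not fire on the result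
    have htj : t ≠ j := fun h => ht₂ (h ▸ hj2)
    have hxt : x t = true := hxne t htj
    have h1 : gToffoli n C₁ t x = fun i => if i = t then !(x t) else x i :=
      gToffoli_fire (fun k hk => hxne k (fun h => hj1 (h ▸ hk)))
    have h1ne : gToffoli n C₁ t x ≠ x := by
      intro h
      have := congrFun h t
      rw [h1] at this
      simp [hxt] at this
    have hyj : gToffoli n C₁ t x j = false := by
      rw [h1]; simp [Ne.symm htj, hxj]
    have h2 : gToffoli n C₂ t (gToffoli n C₁ t x) = gToffoli n C₁ t x :=
      gToffoli_nofire hj2 hyj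
    constructor
    · exact Or.inl ⟨h1ne, not_not.mpr h2⟩
    · simpa [Function.comp, h2] using h1ne
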